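/- Let α, β, k be real numbers with α > −1, β > −1 and 0 < k < β + 1. Then, entrywise, ∫₀¹ W(x) dx = μ₀, where W is the 2×2 matrix-valued weight of the context and μ₀ = (Γ(α+1)Γ(β+2)(α+β−k+2)/Γ(α+β+3)) · [[1, 0], [0, (α+1)(k+1)/((α+β+3)(β−k+1))]]. -/

import Mathlib

open Matrix

noncomputable def Vmat (α β k : ℝ) : Matrix (Fin 2) (Fin 2) ℝ :=
  !![1, 1; 0, -(α + β - k + 2) / (β - k + 1)]

noncomputable def Zmat (β k : ℝ) (x : ℝ) : Matrix (Fin 2) (Fin 2) ℝ :=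
  !![k * x + β - k + 1, (β - k + 1) * (1 - x);
     (β - k + 1) * (1 - x), (β - k + 1) * (1 - x) ^ 2]

/-- The weight matrix `W(x) = x^α (1-x)^β Vᵀ Z(x) V` of the `d = 2`
Jacobi-type example. -/
noncomputable def Wmat (α β k : ℝ) (x : ℝ) : Matrix (Fin 2) (Fin 2) ℝ :=
  (x ^ α * (1 - x) ^ β) • ((Vmat α β k)ᵀ * Zmat β k x * Vmat α β k)

/-- The zeroth moment `μ₀` of the weight `W` of the `d = 2` Jacobi-type
example. -/
noncomputable def mu0 (α β k : ℝ) : Matrix (Fin 2) (Fin 2) ℝ :=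
  (Real.Gamma (α + 1) * Real.Gamma (β + 2) * (α + β - k + 2) /
      Real.Gamma (α + β + 3)) •
    !![1, 0; 0, (α + 1) * (k + 1) / ((α + β + 3) * (β - k + 1))]

/-- The `(-1)`-st moment `μ₋₁` of the weight `W` of the `d = 2` Jacobi-type
example. -/
noncomputable def muM1 (α β k : ℝ) : Matrix (Fin 2) (Fin 2) ℝ :=
  (Real.Gamma α * Real.Gamma (β + 2) / Real.Gamma (α + β + 2)) •
    !![α + β - k + 1, -1;
       -1, ((α + 1) * (k + 1) * (α + β - k + 2) - k * (β - k + 1)) /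
         ((α + β + 2) * (β - k + 1))]

/-! Conjugation by `V` turns `Z(x)` into a quadratic polynomial in `1 - x` with matrix
coefficients, so each entry of `W` is a combination of the Jacobi weights `x^α (1-x)^(β+n)`,
`n = 0, 1, 2`. Their integrals are Beta values `Γ(α+1) Γ(β+n+1) / Γ(α+β+n+2)`, and after
`Γ(s+1) = s Γ(s)` the off-diagonal entries cancel. -/

open Real MeasureTheory Set

lemma eqOn_betaIntegrand (p q : ℝ) :
    EqOn (fun x : ℝ => ((x ^ p * (1 - x) ^ q : ℝ) : ℂ))
      (fun x : ℝ => (x : ℂ) ^ (((p + 1 : ℝ) : ℂ) - 1) * (1 - (x : ℂ)) ^ (((q + 1 : ℝ) : ℂ) - 1))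
      (uIcc 0 1) := by
  intro x hx
  rw [uIcc_of_le zero_le_one] at hx
  simp only [Complex.ofReal_add, Complex.ofReal_one, add_sub_cancel_right]
  rw [Complex.ofReal_mul, Complex.ofReal_cpow hx.1, Complex.ofReal_cpow (sub_nonneg.2 hx.2),
    Complex.ofReal_sub, Complex.ofReal_one]

lemma intervalIntegrable_rpow_mul_one_sub_rpow {p q : ℝ} (hp : -1 < p) (hq : -1 < q) :
    IntervalIntegrable (fun x : ℝ => x ^ p * (1 - x) ^ q) volume 0 1 := by
  have h := Complex.betaIntegral_convergent (u := ((p + 1 : ℝ) : ℂ)) (v := ((q + 1 : ℝ) : ℂ))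
    (by simp; linarith) (by simp; linarith)
  have h' := h.congr ((eqOn_betaIntegrand p q).symm.mono uIoc_subset_uIcc)
  exact ⟨by simpa [IntegrableOn] using h'.1.re, by simp⟩

theorem integral_rpow_mul_one_sub_rpow {p q : ℝ} (hp : -1 < p) (hq : -1 < q) :
    ∫ x in (0 : ℝ)..1, x ^ p * (1 - x) ^ q = Gamma (p + 1) * Gamma (q + 1) / Gamma (p + q + 2) := by
  have h := Complex.betaIntegral_eq_Gamma_mul_div ((p + 1 : ℝ) : ℂ) ((q + 1 : ℝ) : ℂ)
    (by simp; linarith) (by simp; linarith)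
  rw [Complex.betaIntegral, ← intervalIntegral.integral_congr (eqOn_betaIntegrand p q),
    intervalIntegral.integral_ofReal, ← Complex.ofReal_add, Complex.Gamma_ofReal,
    Complex.Gamma_ofReal, Complex.Gamma_ofReal, show p + 1 + (q + 1) = p + q + 2 by ring] at h
  exact_mod_cast h

theorem integral_rpow_mul_one_sub_rpow_mul_pow {p q : ℝ} (hp : -1 < p) (hq : -1 < q) (n : ℕ) :
    ∫ x in (0 : ℝ)..1, x ^ p * (1 - x) ^ q * (1 - x) ^ n
      = Gamma (p + 1) * Gamma (q + n + 1) / Gamma (p + q + n + 2) := by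
  have hqn : -1 < q + n := by linarith [n.cast_nonneg (α := ℝ)]
  rw [show p + q + n + 2 = p + (q + n) + 2 by ring, ← integral_rpow_mul_one_sub_rpow hp hqn]
  refine intervalIntegral.integral_congr fun x hx => ?_
  rw [uIcc_of_le zero_le_one] at hx
  rcases n.eq_zero_or_pos with rfl | hn
  · simp
  · have hn' : (1 : ℝ) ≤ n := by exact_mod_cast hn
    rw [mul_assoc, Real.rpow_add_natCast' (sub_nonneg.2 hx.2) (by linarith)]

theorem integral_rpow_mul_one_sub_rpow_mul_quadratic {p q : ℝ} (hp : -1 < p) (hq : -1 < q)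
    (a b c : ℝ) :
    ∫ x in (0 : ℝ)..1, x ^ p * (1 - x) ^ q * (a + (1 - x) * b + (1 - x) ^ 2 * c)
      = Gamma (p + 1) * Gamma (q + 2) / Gamma (p + q + 3)
        * (a * (p + q + 2) / (q + 1) + b + c * (q + 2) / (p + q + 3)) := by
  set f := fun x : ℝ => x ^ p * (1 - x) ^ q
  have hf : IntervalIntegrable f volume 0 1 := intervalIntegrable_rpow_mul_one_sub_rpow hp hq
  have hfn (n : ℕ) : IntervalIntegrable (fun x => f x * (1 - x) ^ n) volume 0 1 :=
    hf.mul_continuousOn (by fun_prop)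
  have hsplit : (fun x => f x * (a + (1 - x) * b + (1 - x) ^ 2 * c))
      = fun x => a * f x + b * (f x * (1 - x) ^ 1) + c * (f x * (1 - x) ^ 2) := by
    funext x; ring
  rw [hsplit, intervalIntegral.integral_add ((hf.const_mul a).add ((hfn 1).const_mul b))
      ((hfn 2).const_mul c), intervalIntegral.integral_add (hf.const_mul a) ((hfn 1).const_mul b),
    intervalIntegral.integral_const_mul, intervalIntegral.integral_const_mul,
    intervalIntegral.integral_const_mul, integral_rpow_mul_one_sub_rpow hp hq,
    integral_rpow_mul_one_sub_rpow_mul_pow hp hq, integral_rpow_mul_one_sub_rpow_mul_pow hp hq]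
  have hGq1 : Gamma (q + 2) = (q + 1) * Gamma (q + 1) := by
    rw [show q + 2 = q + 1 + 1 by ring, Gamma_add_one (by linarith)]
  have hGpq3 : Gamma (p + q + 3) = (p + q + 2) * Gamma (p + q + 2) := by
    rw [show p + q + 3 = p + q + 2 + 1 by ring, Gamma_add_one (by linarith)]
  have hq1 : 0 < q + 1 := by linarith
  have hpq2 : 0 < p + q + 2 := by linarith
  have hΓq : 0 < Gamma (q + 1) := Gamma_pos_of_pos hq1
  have hΓpq : 0 < Gamma (p + q + 2) := Gamma_pos_of_pos hpq2
  push_cast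
  rw [show q + 1 + 1 = q + 2 by ring, show p + q + 1 + 2 = p + q + 3 by ring,
    show p + q + 2 + 2 = p + q + 3 + 1 by ring,
    Gamma_add_one (s := q + 2) (by linarith), Gamma_add_one (s := p + q + 3) (by linarith),
    hGq1, hGpq3]
  field_simp

lemma Vmat_transpose_mul_Zmat_mul_Vmat {α β k : ℝ} (hd : β - k + 1 ≠ 0) (x : ℝ) :
    (Vmat α β k)ᵀ * Zmat β k x * Vmat α β k
      = !![β + 1, β + 1; β + 1, β + 1]
        + (1 - x) • !![-k, -k - (α + β - k + 2); -k - (α + β - k + 2), -k - 2 * (α + β - k + 2)]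
        + (1 - x) ^ 2 • !![0, 0; 0, (α + β - k + 2) ^ 2 / (β - k + 1)] := by
  ext i j
  fin_cases i <;> fin_cases j <;>
    simp only [Vmat, Zmat, Matrix.mul_apply, transpose_apply, Fin.sum_univ_two, Matrix.add_apply,
      smul_of, smul_cons, smul_eq_mul, Matrix.smul_empty, of_add_of, add_cons, empty_add_empty,
      of_apply, cons_val', cons_val_zero, cons_val_one, cons_val_fin_one, head_cons, tail_cons,
      Fin.zero_eta, Fin.mk_one, Fin.isValue] <;>
    field_simp <;> ring

theorem stmt_12_general (α β k : ℝ) (hα : α > -1) (hβ : β > -1)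
    (hkβ : k < β + 1) :
    ∀ i j : Fin 2,
      ∫ x in (0 : ℝ)..1, Wmat α β k x i j = mu0 α β k i j := by
  have hd : 0 < β - k + 1 := by linarith
  intro i j
  simp only [Wmat, Vmat_transpose_mul_Zmat_mul_Vmat hd.ne', Matrix.smul_apply, Matrix.add_apply,
    smul_eq_mul]
  rw [integral_rpow_mul_one_sub_rpow_mul_quadratic hα hβ]
  have hβ1 : 0 < β + 1 := by linarith
  have hαβ3 : 0 < α + β + 3 := by linarith
  fin_cases i <;> fin_cases j <;>
    simp only [mu0, Fin.zero_eta, Fin.mk_one, Fin.isValue, of_apply, cons_val', cons_val_zero,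
      cons_val_one, cons_val_fin_one, Matrix.smul_apply, smul_eq_mul] <;>
    field_simp <;> ring

/-- The zeroth moment of the weight `W`: `∫₀¹ W(x) dx = μ₀`, entrywise. -/
theorem stmt_12 (α β k : ℝ) (hα : α > -1) (hβ : β > -1)
    (hk : 0 < k) (hkβ : k < β + 1) :
    ∀ i j : Fin 2,
      ∫ x in (0 : ℝ)..1, Wmat α β k x i j = mu0 α β k i j :=
  stmt_12_general α β k hα hβ hkβ
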